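/- There is a constant C, depending only on n, d, K, φ_ℝ and Lip(A), such that for every f ∈ L¹(μ), every x ∈ Γ and every ε > 0, |T^μ_ε f(x) − T^μ_{φ_ε} f(x)| ≤ C M^μ f(x), where T^μ_ε f(x) := ∫_{|x−y|>ε} K(x−y) f(y) dμ(y). In particular |T^μ_ε f(x)| ≤ T^μ_{φ_ε*} f(x) + C M^μ f(x), where T^μ_{φ_ε*} f(x) := sup_{δ>0} |T^μ_{φ_δ} f(x)|. -/

import Mathlib

open MeasureTheory Set Filter ENNReal NNReal

noncomputable section

/-- Euclidean space `ℝ^k`. -/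
abbrev Euc (k : ℕ) : Type := EuclideanSpace ℝ (Fin k)

/-- Projection `x ↦ x̃` onto the first `n` coordinates. -/
def projn (n d : ℕ) (h : n ≤ d) (x : Euc d) : Euc n := WithLp.toLp 2 (fun i => x (Fin.castLE h i))

/-- An odd Calderón–Zygmund kernel of homogeneity `-n` on `ℝ^d`, with constant `CK`. -/
structure IsCZKernel (n d : ℕ) (CK : ℝ) (K : Euc d → ℝ) : Prop where
  pos : 0 < CK
  odd : ∀ x : Euc d, K (-x) = -K x
  diff : ∀ x : Euc d, x ≠ 0 → DifferentiableAt ℝ K x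
  diff2 : ∀ x : Euc d, x ≠ 0 → DifferentiableAt ℝ (fderiv ℝ K) x
  bound : ∀ x : Euc d, x ≠ 0 → |K x| ≤ CK / ‖x‖ ^ n
  fderiv_bound : ∀ x : Euc d, x ≠ 0 → ‖fderiv ℝ K x‖ ≤ CK / ‖x‖ ^ (n + 1)
  fderiv2_bound : ∀ x : Euc d, x ≠ 0 → ‖fderiv ℝ (fderiv ℝ K) x‖ ≤ CK / ‖x‖ ^ (n + 2)

/-- The smooth truncation profile `φ_ℝ`: a nondecreasing `C²` function with
`χ_{[3√n,∞)} ≤ φ_ℝ ≤ χ_{[2.1√n,∞)}` (extended by `0` to all of `ℝ`). -/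
structure IsCutoff (n : ℕ) (φR : ℝ → ℝ) : Prop where
  mono : Monotone φR
  smooth : ContDiff ℝ 2 φR
  nonneg : ∀ t : ℝ, 0 ≤ φR t
  le_one : ∀ t : ℝ, φR t ≤ 1
  eq_zero : ∀ t : ℝ, t < 2.1 * Real.sqrt n → φR t = 0
  eq_one : ∀ t : ℝ, 3 * Real.sqrt n ≤ t → φR t = 1

/-- `φ_ε(x) = φ_ℝ(|x̃|/ε)`. -/
def phiE (n d : ℕ) (h : n ≤ d) (φR : ℝ → ℝ) (ε : ℝ) (x : Euc d) : ℝ :=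
  φR (‖projn n d h x‖ / ε)

/-- The map `u ↦ (u, A u)` from `ℝⁿ` to `ℝ^d`. -/
def graphMap (n d : ℕ) (h : n ≤ d) (A : Euc n → Euc (d - n)) (u : Euc n) : Euc d :=
  WithLp.toLp 2 (fun i => if hi : (i : ℕ) < n then u ⟨i, hi⟩
           else A u ⟨(i : ℕ) - n, by have := i.isLt; omega⟩)

/-- The graph `Γ` of `A`. -/
def graphSet (n d : ℕ) (h : n ≤ d) (A : Euc n → Euc (d - n)) : Set (Euc d) :=
  Set.range (graphMap n d h A)

/-- `H^n` restricted to the graph of `A`. -/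
def graphMeasure (n d : ℕ) (h : n ≤ d) (A : Euc n → Euc (d - n)) : Measure (Euc d) :=
  (μH[(n : ℝ)]).restrict (graphSet n d h A)

/-- The measure `f · H^n_Γ`. -/
def lipGraphMeasure (n d : ℕ) (h : n ≤ d) (A : Euc n → Euc (d - n)) (f : Euc d → ℝ) :
    Measure (Euc d) :=
  (graphMeasure n d h A).withDensity fun y => ENNReal.ofReal (f y)

/-- The smoothly truncated singular integral `T^ν_{φ_ε} f(x) = ∫ φ_ε(x-y) K(x-y) f(y) dν(y)`. -/
def Tphi (n d : ℕ) (h : n ≤ d) (φR : ℝ → ℝ) (K : Euc d → ℝ) (ν : Measure (Euc d))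
    (f : Euc d → ℝ) (ε : ℝ) (x : Euc d) : ℝ :=
  ∫ y, phiE n d h φR ε (x - y) * K (x - y) * f y ∂ν

/-- The `ρ`-variation of a family `G = {G ε}_{ε > 0}`. -/
def varRho (ρ : ℝ) (G : ℝ → ℝ) : ℝ≥0∞ :=
  ⨆ (ε : ℤ → ℝ) (_ : Antitone ε) (_ : ∀ m : ℤ, 0 < ε m),
    (∑' m : ℤ, (ENNReal.ofReal |G (ε (m + 1)) - G (ε m)|) ^ ρ) ^ (1 / ρ)

/-- The oscillation of a family `G = {G ε}_{ε > 0}` with respect to a fixed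
sequence `r`. -/
def oscO (r : ℤ → ℝ) (G : ℝ → ℝ) : ℝ≥0∞ :=
  ⨆ (ε : ℤ → ℝ) (δ : ℤ → ℝ)
    (_ : ∀ m : ℤ, r (m + 1) ≤ ε m ∧ ε m ≤ δ m ∧ δ m ≤ r m),
    (∑' m : ℤ, (ENNReal.ofReal |G (ε m) - G (δ m)|) ^ (2 : ℝ)) ^ (1 / 2 : ℝ)

/-- The `λ`-jump counting function of a family `G = {G ε}_{ε > 0}`. -/
def jumpN (lam : ℝ) (G : ℝ → ℝ) : ℝ≥0∞ :=
  ⨆ (N : ℕ) (_ : ∃ ε δ : ℕ → ℝ,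
      (∀ i, i < N → 0 < ε i) ∧ (∀ i, i < N → ε i < δ i) ∧
      (∀ i, i + 1 < N → δ i ≤ ε (i + 1)) ∧
      (∀ i, i < N → lam < |G (ε i) - G (δ i)|)), (N : ℝ≥0∞)

/-- The `ρ`-variation of a `ℤ`-indexed family. -/
def varRhoZ (ρ : ℝ) (G : ℤ → ℝ) : ℝ≥0∞ :=
  ⨆ (mk : ℤ → ℤ) (_ : Antitone mk),
    (∑' k : ℤ, (ENNReal.ofReal |G (mk (k + 1)) - G (mk k)|) ^ ρ) ^ (1 / ρ)

/-- The oscillation of a `ℤ`-indexed family with respect to a fixed integer sequence `r`. -/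
def oscZ (r : ℤ → ℤ) (G : ℤ → ℝ) : ℝ≥0∞ :=
  ⨆ (ε : ℤ → ℤ) (δ : ℤ → ℤ)
    (_ : ∀ m : ℤ, r (m + 1) ≤ ε m ∧ ε m ≤ δ m ∧ δ m ≤ r m),
    (∑' m : ℤ, (ENNReal.ofReal |G (ε m) - G (δ m)|) ^ (2 : ℝ)) ^ (1 / 2 : ℝ)

/-- A cube `a + [0,b)^n ⊆ ℝⁿ`. -/
def cubeSet (n : ℕ) (a : Euc n) (b : ℝ) : Set (Euc n) :=
  {u | ∀ i : Fin n, a i ≤ u i ∧ u i < a i + b}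

/-- A "vertical" cube `D = D̃ × ℝ^{d-n}`, `D̃` a cube of `ℝⁿ`. -/
def IsVCube (n d : ℕ) (h : n ≤ d) (D : Set (Euc d)) : Prop :=
  ∃ (a : Euc n) (b : ℝ), 0 < b ∧ D = {x : Euc d | projn n d h x ∈ cubeSet n a b}

/-- The half-open v-cube with center `z` (in `ℝⁿ`) and side length `ℓ`. -/
def vQ (n d : ℕ) (h : n ≤ d) (z : Euc n) (ℓ : ℝ) : Set (Euc d) :=
  {x : Euc d | ∀ i : Fin n,
    z i - ℓ / 2 ≤ projn n d h x i ∧ projn n d h x i < z i + ℓ / 2}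

/-- The cylinder `B(z̃_Q, C_Γ ℓ(Q)) × ℝ^{d-n}` associated with the v-cube of center `z`
and side length `ℓ`. -/
def BQ (n d : ℕ) (h : n ≤ d) (CΓ : ℝ) (z : Euc n) (ℓ : ℝ) : Set (Euc d) :=
  {x : Euc d | dist (projn n d h x) z ≤ CΓ * ℓ}

/-- The grid cube `D_m^a = (a + [0, 2^{-m})^n) × ℝ^{d-n}`. -/
def Dgrid (n d : ℕ) (h : n ≤ d) (a : Euc n) (m : ℤ) : Set (Euc d) :=
  {x : Euc d | projn n d h x ∈ cubeSet n a ((2 : ℝ) ^ (-m))}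

/-- The center of the dyadic cube `2^{-m}(k + [0,1)^n)`. -/
def dyadicCenter (n : ℕ) (m : ℤ) (k : Fin n → ℤ) : Euc n :=
  WithLp.toLp 2 (fun i => ((k i : ℝ) + 1 / 2) * (2 : ℝ) ^ (-m))

/-- `∫_{D^c} K(z-y) dν(y)`, understood as `lim_{M→∞} ∫_{D^c ∩ {|z-y|<M}} K(z-y) dν(y)`. -/
def Ktail (d : ℕ) (K : Euc d → ℝ) (ν : Measure (Euc d)) (D : Set (Euc d)) (z : Euc d) : ℝ :=
  limUnder atTop fun M : ℝ => ∫ y in Dᶜ ∩ Metric.ball z M, K (z - y) ∂ν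

/-- `E_D ν = ν(D)⁻¹ ∫_D ∫_{D^c} K(z-y) dν(y) dν(z)`. -/
def cubeAvg (d : ℕ) (K : Euc d → ℝ) (ν : Measure (Euc d)) (D : Set (Euc d)) : ℝ :=
  ((ν D).toReal)⁻¹ * ∫ z in D, Ktail d K ν D z ∂ν

/-- The averaged martingale `E_m ν(x) = 2^{mn} ∫_{{a : x ∈ D_m^a}} E_{D_m^a} ν da`. -/
def Em (n d : ℕ) (h : n ≤ d) (K : Euc d → ℝ) (ν : Measure (Euc d)) (m : ℤ) (x : Euc d) : ℝ :=
  (2 : ℝ) ^ (m * (n : ℤ)) *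
    ∫ a in {a : Euc n | x ∈ Dgrid n d h a m},
      cubeAvg d K ν (Dgrid n d h a m) ∂(volume : Measure (Euc n))

/-- `Λ_m^ν(x,z;y) = 2^{mn} ∫_{{a : x,z ∈ D_m^a, y ∉ D_m^a}} ν(D_m^a)⁻¹ da`. -/
def LambdaM (n d : ℕ) (h : n ≤ d) (ν : Measure (Euc d)) (m : ℤ) (x z y : Euc d) : ℝ :=
  (2 : ℝ) ^ (m * (n : ℤ)) *
    ∫ a in {a : Euc n |
        x ∈ Dgrid n d h a m ∧ z ∈ Dgrid n d h a m ∧ y ∉ Dgrid n d h a m},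
      ((ν (Dgrid n d h a m)).toReal)⁻¹ ∂(volume : Measure (Euc n))

/-- The doubly truncated maximal singular integral
`T_*ν(x) = sup_{0<ε<M} |∫_{ε<|x-y|<M} K(x-y) dν(y)|`. -/
def Tstar (d : ℕ) (K : Euc d → ℝ) (ν : Measure (Euc d)) (x : Euc d) : ℝ≥0∞ :=
  ⨆ (ε : ℝ) (M : ℝ) (_ : 0 < ε) (_ : ε < M),
    ENNReal.ofReal |∫ y in {y : Euc d | ε < dist x y ∧ dist x y < M}, K (x - y) ∂ν|

/-- `(Kφ_ε ∗ ν)(x)`, understood as `lim_{M→∞} ∫_{|x-y|<M} φ_ε(x-y) K(x-y) dν(y)`. -/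
def KphiM (n d : ℕ) (h : n ≤ d) (φR : ℝ → ℝ) (K : Euc d → ℝ) (ν : Measure (Euc d))
    (ε : ℝ) (x : Euc d) : ℝ :=
  limUnder atTop fun M : ℝ =>
    ∫ y in Metric.ball x M, phiE n d h φR ε (x - y) * K (x - y) ∂ν

/-- An (affine) `n`-plane in `ℝ^d`. -/
def IsNPlane (n d : ℕ) (L : Set (Euc d)) : Prop :=
  ∃ (p : Euc d) (φ : Euc n →ₗᵢ[ℝ] Euc d), L = Set.range fun u => p + φ u

/-- The localized Wasserstein-type distance
`dist_F(σ,ν) = sup {|∫ g dσ - ∫ g dν| : Lip(g) ≤ 1, supp g ⊆ F}`. -/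
def wdist (d : ℕ) (F : Set (Euc d)) (σ ν : Measure (Euc d)) : ℝ≥0∞ :=
  ⨆ (g : Euc d → ℝ) (_ : LipschitzWith 1 g) (_ : Function.support g ⊆ F),
    ENNReal.ofReal |(∫ y, g y ∂σ) - ∫ y, g y ∂ν|

/-- The (topological) support of a measure. -/
def msupport (d : ℕ) (μ : Measure (Euc d)) : Set (Euc d) :=
  {x : Euc d | ∀ U : Set (Euc d), IsOpen U → x ∈ U → 0 < μ U}

open Classical in
/-- The coefficient `α_μ(Q)` of the v-cube `Q` with center `z` and side length `ℓ`. -/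
def alphaC (n d : ℕ) (h : n ≤ d) (CΓ : ℝ) (μ : Measure (Euc d)) (z : Euc n) (ℓ : ℝ) :
    ℝ≥0∞ :=
  if vQ n d h z ℓ ∩ msupport d μ = ∅ then 0
  else (ENNReal.ofReal (ℓ ^ (n + 1)))⁻¹ *
    ⨅ (c : ℝ≥0) (L : Set (Euc d)) (_ : IsNPlane n d L),
      wdist d (BQ n d h CΓ z ℓ) μ ((c : ℝ≥0∞) • (μH[(n : ℝ)]).restrict L)

/-- The coefficient `β_{2,μ}(Q)` of the v-cube `Q` with center `z` and side length `ℓ`. -/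
def beta2 (n d : ℕ) (h : n ≤ d) (CΓ : ℝ) (μ : Measure (Euc d)) (z : Euc n) (ℓ : ℝ) :
    ℝ≥0∞ :=
  ⨅ (L : Set (Euc d)) (_ : IsNPlane n d L),
    ((ENNReal.ofReal (ℓ ^ n))⁻¹ *
      ∫⁻ y in vQ n d h z (CΓ * ℓ),
        ENNReal.ofReal ((Metric.infDist y L / ℓ) ^ 2) ∂μ) ^ (1 / 2 : ℝ)

/-- The average `m_Q(g) = μ(Q)⁻¹ ∫_Q g dμ`. -/
def mAvg (d : ℕ) (μ : Measure (Euc d)) (Q : Set (Euc d)) (g : Euc d → ℝ) : ℝ :=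
  ((μ Q).toReal)⁻¹ * ∫ y in Q, g y ∂μ

/-- The Hardy–Littlewood maximal operator over v-cubes. -/
def maxHL (n d : ℕ) (h : n ≤ d) (μ : Measure (Euc d)) (g : Euc d → ℝ) (x : Euc d) : ℝ≥0∞ :=
  ⨆ (Q : Set (Euc d)) (_ : IsVCube n d h Q) (_ : x ∈ Q),
    ENNReal.ofReal (mAvg d μ Q fun y => |g y|)

/-- The sharp maximal operator over v-cubes. -/
def maxSharp (n d : ℕ) (h : n ≤ d) (μ : Measure (Euc d)) (g : Euc d → ℝ) (x : Euc d) :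
    ℝ≥0∞ :=
  ⨆ (Q : Set (Euc d)) (_ : IsVCube n d h Q) (_ : x ∈ Q),
    ENNReal.ofReal (mAvg d μ Q fun y => |g y - mAvg d μ Q g|)

/-- The centered Hardy–Littlewood maximal operator `M^ν`. -/
def maxB (d : ℕ) (ν : Measure (Euc d)) (f : Euc d → ℝ) (x : Euc d) : ℝ≥0∞ :=
  ⨆ (r : ℝ) (_ : 0 < r),
    (ν (Metric.ball x r))⁻¹ * ∫⁻ y in Metric.ball x r, ENNReal.ofReal |f y| ∂ν

/-! On `Γ` one has `|x - y| ≤ (1 + Lip A) |x̃ - ỹ|`. The rough kernel `χ_{|x-y|>ε} K` and the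
smooth kernel `φ_ε K` agree where `|x̃ - ỹ| ≥ 3√n ε` (there `φ_ε = 1`), and both vanish where
`|x - y| ≤ ε` (there `|x̃ - ỹ| ≤ ε < 2.1√n ε`, so `φ_ε = 0`). Hence on `Γ` their difference is
supported in the ball `B(x, 3√n (1 + Lip A) ε)` and bounded by `C_K ε^{-n}`. As `Γ` is a
Lipschitz image of `ℝⁿ`, whose Hausdorff measure is a Haar measure, this ball has measure
`≲ ε^n`, and the difference is bounded by a constant times the average of `|f|` over the ball,
which is at most `M^μ f(x)`. -/
instance {n : ℕ} : Measure.IsAddHaarMeasure (μH[(n : ℝ)] : Measure (Euc n)) := by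
  simpa [finrank_euclideanSpace_fin] using isAddHaarMeasure_hausdorffMeasure (E := Euc n)

section Graph

variable {n d : ℕ}

lemma sum_univ_eq_sum_castLE_add {M : Type*} [AddCommMonoid M] (h : n ≤ d) (g : Fin d → M) :
    ∑ i, g i = ∑ i : Fin n, g (Fin.castLE h i) +
      ∑ j : Fin (d - n), g ⟨n + j, by omega⟩ := by
  rw [← (finCongr (Nat.add_sub_cancel' h)).sum_comp, Fin.sum_univ_add]
  rfl

lemma norm_sq_eq_norm_projn_sq_add (h : n ≤ d) (x : Euc d) :
    ‖x‖ ^ 2 = ‖projn n d h x‖ ^ 2 + ∑ j : Fin (d - n), ‖x ⟨n + j, by omega⟩‖ ^ 2 := by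
  simp only [EuclideanSpace.norm_sq_eq]
  exact sum_univ_eq_sum_castLE_add h _

lemma norm_projn_le (h : n ≤ d) (x : Euc d) : ‖projn n d h x‖ ≤ ‖x‖ := by
  refine pow_le_pow_iff_left₀ (norm_nonneg _) (norm_nonneg _) two_ne_zero |>.mp ?_
  rw [norm_sq_eq_norm_projn_sq_add h]
  exact le_add_of_nonneg_right (by positivity)

lemma continuous_projn (h : n ≤ d) : Continuous (projn n d h) := by
  unfold projn; fun_prop

lemma projn_sub (h : n ≤ d) (x y : Euc d) :
    projn n d h (x - y) = projn n d h x - projn n d h y := rfl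

lemma projn_graphMap (h : n ≤ d) (A : Euc n → Euc (d - n)) (u : Euc n) :
    projn n d h (graphMap n d h A u) = u := by
  ext i
  simp [projn, graphMap]

lemma graphMap_apply_add (h : n ≤ d) (A : Euc n → Euc (d - n)) (u : Euc n) (j : Fin (d - n)) :
    graphMap n d h A u ⟨n + j, by omega⟩ = A u j := by
  simp [graphMap]

variable {A : Euc n → Euc (d - n)} {LA : ℝ≥0}

lemma norm_graphMap_sub_le (h : n ≤ d) (hA : LipschitzWith LA A) (u v : Euc n) :
    ‖graphMap n d h A u - graphMap n d h A v‖ ≤ (1 + LA) * ‖u - v‖ := by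
  have hAuv : ‖A u - A v‖ ≤ LA * ‖u - v‖ := by simpa only [dist_eq_norm] using hA.dist_le_mul u v
  refine pow_le_pow_iff_left₀ (norm_nonneg _) (by positivity) two_ne_zero |>.mp ?_
  calc ‖graphMap n d h A u - graphMap n d h A v‖ ^ 2 = ‖u - v‖ ^ 2 + ‖A u - A v‖ ^ 2 := by
        rw [norm_sq_eq_norm_projn_sq_add h, projn_sub, projn_graphMap, projn_graphMap,
          EuclideanSpace.norm_sq_eq (A u - A v)]
        simp [graphMap_apply_add]
    _ ≤ ((1 + LA) * ‖u - v‖) ^ 2 := by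
        nlinarith [norm_nonneg (u - v), norm_nonneg (A u - A v), LA.coe_nonneg]

lemma lipschitzWith_graphMap (h : n ≤ d) (hA : LipschitzWith LA A) :
    LipschitzWith (1 + LA) (graphMap n d h A) :=
  LipschitzWith.of_dist_le_mul fun u v => by
    simpa only [dist_eq_norm, NNReal.coe_add, NNReal.coe_one] using norm_graphMap_sub_le h hA u v

lemma antilipschitzWith_graphMap (h : n ≤ d) (A : Euc n → Euc (d - n)) :
    AntilipschitzWith 1 (graphMap n d h A) :=
  AntilipschitzWith.of_le_mul_dist fun u v => by
    simpa only [dist_eq_norm, NNReal.coe_one, one_mul, projn_sub, projn_graphMap]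
      using norm_projn_le h (graphMap n d h A u - graphMap n d h A v)

lemma isClosed_graphSet (h : n ≤ d) (hA : LipschitzWith LA A) :
    IsClosed (graphSet n d h A) :=
  (antilipschitzWith_graphMap h A).isClosed_range (lipschitzWith_graphMap h hA).uniformContinuous

lemma ae_mem_graphSet (h : n ≤ d) (hA : LipschitzWith LA A) :
    ∀ᵐ y ∂graphMeasure n d h A, y ∈ graphSet n d h A :=
  ae_restrict_mem (isClosed_graphSet h hA).measurableSet

lemma norm_sub_le_of_mem_graphSet (h : n ≤ d) (hA : LipschitzWith LA A) {x y : Euc d}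
    (hx : x ∈ graphSet n d h A) (hy : y ∈ graphSet n d h A) :
    ‖x - y‖ ≤ (1 + LA) * ‖projn n d h (x - y)‖ := by
  obtain ⟨⟨u, rfl⟩, ⟨v, rfl⟩⟩ := And.intro hx hy
  simpa only [projn_sub, projn_graphMap] using norm_graphMap_sub_le h hA u v

lemma hausdorffMeasure_ball (u : Euc n) {r : ℝ} (hr : 0 < r) :
    μH[(n : ℝ)] (Metric.ball u r) =
      ENNReal.ofReal (r ^ n) * μH[(n : ℝ)] (Metric.ball (0 : Euc n) 1) := by
  simpa [finrank_euclideanSpace_fin] using Measure.addHaar_ball_of_pos μH[(n : ℝ)] u hr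

lemma graphMeasure_ball_le (h : n ≤ d) (hA : LipschitzWith LA A) {x : Euc d}
    (hx : x ∈ graphSet n d h A) {r : ℝ} (hr : 0 < r) :
    graphMeasure n d h A (Metric.ball x r) ≤
      ENNReal.ofReal (((1 + LA) * r) ^ n) * μH[(n : ℝ)] (Metric.ball (0 : Euc n) 1) := by
  obtain ⟨u, rfl⟩ := hx
  have hsub : Metric.ball (graphMap n d h A u) r ∩ graphSet n d h A ⊆
      graphMap n d h A '' Metric.ball u r := by
    rintro _ ⟨hy, v, rfl⟩
    refine ⟨v, ?_, rfl⟩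
    rw [Metric.mem_ball, dist_eq_norm] at hy ⊢
    simpa only [projn_sub, projn_graphMap] using (norm_projn_le h _).trans_lt hy
  rw [graphMeasure, Measure.restrict_apply measurableSet_ball]
  calc μH[(n : ℝ)] (Metric.ball (graphMap n d h A u) r ∩ graphSet n d h A)
      ≤ ((1 + LA : ℝ≥0) : ℝ≥0∞) ^ (n : ℝ) * μH[(n : ℝ)] (Metric.ball u r) :=
        (measure_mono hsub).trans <|
          (lipschitzWith_graphMap h hA).hausdorffMeasure_image_le (Nat.cast_nonneg n) _
    _ = ENNReal.ofReal (((1 + LA) * r) ^ n) * μH[(n : ℝ)] (Metric.ball (0 : Euc n) 1) := by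
        rw [hausdorffMeasure_ball u hr, ← mul_assoc, ENNReal.rpow_natCast,
          ← ENNReal.ofReal_coe_nnreal, ← ENNReal.ofReal_pow (by positivity),
          ← ENNReal.ofReal_mul (by positivity), mul_pow]
        push_cast; rfl

end Graph

section Kernel

variable {n d : ℕ} {CK : ℝ} {K : Euc d → ℝ} {φR : ℝ → ℝ} {ε : ℝ}

lemma IsCZKernel.measurable (hK : IsCZKernel n d CK K) : Measurable K :=
  measurable_of_continuousOn_compl_singleton 0 fun z hz =>
    (hK.diff z hz).continuousAt.continuousWithinAt

lemma IsCZKernel.abs_le_of_le_norm (hK : IsCZKernel n d CK K) (hε : 0 < ε) {z : Euc d}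
    (hz : ε ≤ ‖z‖) : |K z| ≤ CK / ε ^ n :=
  (hK.bound z (norm_pos_iff.mp (hε.trans_le hz))).trans <|
    div_le_div_of_nonneg_left hK.pos.le (pow_pos hε n) (pow_le_pow_left₀ hε.le hz n)

lemma IsCutoff.phiE_eq_zero (hφ : IsCutoff n φR) (hn : 0 < n) (h : n ≤ d) (hε : 0 < ε)
    {z : Euc d} (hz : ‖z‖ ≤ ε) : phiE n d h φR ε z = 0 := by
  have hsqrt : 1 ≤ Real.sqrt n := Real.one_le_sqrt.mpr (by exact_mod_cast hn)
  have hratio : ‖projn n d h z‖ / ε ≤ 1 := (div_le_one hε).mpr ((norm_projn_le h z).trans hz)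
  exact hφ.eq_zero _ (by linarith)

lemma IsCutoff.phiE_eq_one (hφ : IsCutoff n φR) (h : n ≤ d) (hε : 0 < ε) {z : Euc d}
    (hz : 3 * Real.sqrt n * ε ≤ ‖projn n d h z‖) : phiE n d h φR ε z = 1 :=
  hφ.eq_one _ ((le_div_iff₀ hε).mpr hz)

lemma IsCutoff.continuous_phiE (hφ : IsCutoff n φR) (h : n ≤ d) :
    Continuous (phiE n d h φR ε) :=
  hφ.smooth.continuous.comp ((continuous_projn h).norm.div_const ε)

lemma abs_phiE_mul_le (hK : IsCZKernel n d CK K) (hφ : IsCutoff n φR) (hn : 0 < n)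
    (h : n ≤ d) (hε : 0 < ε) (z : Euc d) : |phiE n d h φR ε z * K z| ≤ CK / ε ^ n := by
  rcases le_or_gt ‖z‖ ε with hz | hz
  · rw [hφ.phiE_eq_zero hn h hε hz, zero_mul, abs_zero]
    exact div_nonneg hK.pos.le (pow_nonneg hε.le n)
  · rw [abs_mul, phiE, abs_of_nonneg (hφ.nonneg _)]
    exact (mul_le_of_le_one_left (abs_nonneg _) (hφ.le_one _)).trans
      (hK.abs_le_of_le_norm hε hz.le)

end Kernel

section MaximalFunction

variable {d : ℕ} (ν : Measure (Euc d)) (f : Euc d → ℝ) {x : Euc d} {r : ℝ}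

lemma setLIntegral_ball_le_measure_mul_maxB (hr : 0 < r) (hfin : ν (Metric.ball x r) ≠ ⊤) :
    ∫⁻ y in Metric.ball x r, ENNReal.ofReal |f y| ∂ν ≤ ν (Metric.ball x r) * maxB d ν f x := by
  rcases eq_or_ne (ν (Metric.ball x r)) 0 with h0 | h0
  · rw [setLIntegral_measure_zero _ _ h0]
    exact zero_le
  calc ∫⁻ y in Metric.ball x r, ENNReal.ofReal |f y| ∂ν
      = ν (Metric.ball x r) *
          ((ν (Metric.ball x r))⁻¹ * ∫⁻ y in Metric.ball x r, ENNReal.ofReal |f y| ∂ν) := by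
        rw [← mul_assoc, ENNReal.mul_inv_cancel h0 hfin, one_mul]
    _ ≤ ν (Metric.ball x r) * maxB d ν f x :=
        mul_le_mul' le_rfl (le_iSup₂ (f := fun r (_ : 0 < r) => (ν (Metric.ball x r))⁻¹ *
          ∫⁻ y in Metric.ball x r, ENNReal.ofReal |f y| ∂ν) r hr)

lemma ofReal_abs_integral_mul_le_maxB (hr : 0 < r) (hfin : ν (Metric.ball x r) ≠ ⊤)
    {k : Euc d → ℝ} {c : ℝ} (hk : ∀ᵐ y ∂ν, |k y| ≤ (Metric.ball x r).indicator (fun _ => c) y) :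
    ENNReal.ofReal |∫ y, k y * f y ∂ν| ≤ ENNReal.ofReal c * ν (Metric.ball x r) * maxB d ν f x := by
  have hpointwise : ∀ᵐ y ∂ν, ‖k y * f y‖ₑ ≤
      (Metric.ball x r).indicator (fun y => ENNReal.ofReal c * ENNReal.ofReal |f y|) y := by
    filter_upwards [hk] with y hy
    by_cases hyB : y ∈ Metric.ball x r
    · rw [Set.indicator_of_mem hyB] at hy ⊢
      rw [enorm_mul, Real.enorm_eq_ofReal_abs, Real.enorm_eq_ofReal_abs]
      gcongr
    · rw [Set.indicator_of_notMem hyB] at hy ⊢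
      simp [abs_nonpos_iff.mp hy]
  calc ENNReal.ofReal |∫ y, k y * f y ∂ν| ≤ ∫⁻ y, ‖k y * f y‖ₑ ∂ν := by
        rw [← Real.enorm_eq_ofReal_abs]
        exact enorm_integral_le_lintegral_enorm _
    _ ≤ ENNReal.ofReal c * ∫⁻ y in Metric.ball x r, ENNReal.ofReal |f y| ∂ν := by
        rw [← lintegral_const_mul' _ _ ENNReal.ofReal_ne_top,
          ← lintegral_indicator Metric.isOpen_ball.measurableSet]
        exact lintegral_mono_ae hpointwise
    _ ≤ ENNReal.ofReal c * ν (Metric.ball x r) * maxB d ν f x := by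
        rw [mul_assoc]
        gcongr
        exact setLIntegral_ball_le_measure_mul_maxB ν f hr hfin

end MaximalFunction

section Truncation

variable {n d : ℕ} {CK : ℝ} {K : Euc d → ℝ} {φR : ℝ → ℝ} {ε : ℝ}

lemma integral_sub_Tphi_eq (hK : IsCZKernel n d CK K) (hφ : IsCutoff n φR) (hn : 0 < n)
    (h : n ≤ d) {ν : Measure (Euc d)} {f : Euc d → ℝ} (hf : Integrable f ν) (x : Euc d)
    (hε : 0 < ε) :
    (∫ y in {y | ε < dist x y}, K (x - y) * f y ∂ν) - Tphi n d h φR K ν f ε x =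
      ∫ y, ({y | ε < dist x y}.indicator 1 y - phiE n d h φR ε (x - y)) * K (x - y) * f y ∂ν := by
  set S : Set (Euc d) := {y | ε < dist x y}
  have hS : MeasurableSet S := measurableSet_lt measurable_const (measurable_const.dist measurable_id)
  have hKx : Measurable fun y => K (x - y) := hK.measurable.comp (measurable_const.sub measurable_id)
  have hrough : Integrable (fun y => S.indicator (fun y => K (x - y)) y * f y) ν := by
    refine hf.bdd_mul (c := CK / ε ^ n) (hKx.indicator hS).aestronglyMeasurable
      (ae_of_all _ fun y => ?_)
    rw [Real.norm_eq_abs, Set.indicator_apply]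
    split_ifs with hy
    · exact hK.abs_le_of_le_norm hε (by rw [← dist_eq_norm]; exact le_of_lt hy)
    · simpa using div_nonneg hK.pos.le (pow_nonneg hε.le n)
  have hsmooth : Integrable (fun y => phiE n d h φR ε (x - y) * K (x - y) * f y) ν :=
    hf.bdd_mul (c := CK / ε ^ n)
      (((hφ.continuous_phiE h).measurable.comp (measurable_const.sub measurable_id)).mul
        hKx).aestronglyMeasurable
      (ae_of_all _ fun y => abs_phiE_mul_le hK hφ hn h hε (x - y))
  rw [← integral_indicator hS, Tphi, ← integral_sub ?_ hsmooth]
  · congr 1 with y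
    by_cases hy : y ∈ S <;> simp [hy, sub_mul]
  · convert hrough using 2 with y
    by_cases hy : y ∈ S <;> simp [hy]

lemma abs_indicator_sub_phiE_mul_le (hK : IsCZKernel n d CK K) (hφ : IsCutoff n φR)
    (hn : 0 < n) (h : n ≤ d) {A : Euc n → Euc (d - n)} {LA : ℝ≥0} (hA : LipschitzWith LA A)
    {x y : Euc d} (hx : x ∈ graphSet n d h A) (hy : y ∈ graphSet n d h A) (hε : 0 < ε) :
    |({y | ε < dist x y}.indicator 1 y - phiE n d h φR ε (x - y)) * K (x - y)| ≤
      (Metric.ball x (3 * Real.sqrt n * (1 + LA) * ε)).indicator (fun _ => CK / ε ^ n) y := by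
  have hnonneg : 0 ≤ (Metric.ball x (3 * Real.sqrt n * (1 + LA) * ε)).indicator
      (fun _ => CK / ε ^ n) y :=
    Set.indicator_nonneg (fun _ _ => div_nonneg hK.pos.le (pow_nonneg hε.le n)) y
  rcases le_or_gt (dist x y) ε with hnear | hfar
  · rw [Set.indicator_of_notMem (show y ∉ {y | ε < dist x y} from not_lt.mpr hnear),
      hφ.phiE_eq_zero hn h hε (by rwa [← dist_eq_norm]), sub_zero, zero_mul, abs_zero]
    exact hnonneg
  rw [Set.indicator_of_mem (show y ∈ {y | ε < dist x y} from hfar), Pi.one_apply]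
  by_cases hproj : 3 * Real.sqrt n * ε ≤ ‖projn n d h (x - y)‖
  · rw [hφ.phiE_eq_one h hε hproj, sub_self, zero_mul, abs_zero]
    exact hnonneg
  have hyB : y ∈ Metric.ball x (3 * Real.sqrt n * (1 + LA) * ε) := by
    rw [Metric.mem_ball, dist_comm, dist_eq_norm]
    calc ‖x - y‖ ≤ (1 + LA) * ‖projn n d h (x - y)‖ := norm_sub_le_of_mem_graphSet h hA hx hy
      _ < (1 + LA) * (3 * Real.sqrt n * ε) := by gcongr; exact not_le.mp hproj
      _ = 3 * Real.sqrt n * (1 + LA) * ε := by ring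
  have hφ01 := hφ.nonneg (‖projn n d h (x - y)‖ / ε)
  have hφ1 := hφ.le_one (‖projn n d h (x - y)‖ / ε)
  rw [Set.indicator_of_mem hyB, abs_mul]
  refine (mul_le_of_le_one_left (abs_nonneg _) (abs_le.mpr ⟨?_, ?_⟩)).trans
    (hK.abs_le_of_le_norm hε (by rw [← dist_eq_norm]; exact hfar.le))
  all_goals unfold phiE; linarith

lemma ofReal_abs_integral_sub_Tphi_le (hK : IsCZKernel n d CK K) (hφ : IsCutoff n φR)
    (hn : 0 < n) (h : n ≤ d) {A : Euc n → Euc (d - n)} {LA : ℝ≥0} (hA : LipschitzWith LA A)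
    {f : Euc d → ℝ} (hf : Integrable f (graphMeasure n d h A)) {x : Euc d}
    (hx : x ∈ graphSet n d h A) (hε : 0 < ε) :
    ENNReal.ofReal |(∫ y in {y | ε < dist x y}, K (x - y) * f y ∂(graphMeasure n d h A)) -
        Tphi n d h φR K (graphMeasure n d h A) f ε x| ≤
      ENNReal.ofReal (CK * (3 * Real.sqrt n * (1 + LA) ^ 2) ^ n) *
        μH[(n : ℝ)] (Metric.ball (0 : Euc n) 1) * maxB d (graphMeasure n d h A) f x := by
  have hr : 0 < 3 * Real.sqrt n * (1 + LA) * ε := by positivity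
  have hball := graphMeasure_ball_le h hA hx hr
  have hfin : graphMeasure n d h A (Metric.ball x (3 * Real.sqrt n * (1 + LA) * ε)) ≠ ⊤ :=
    ne_top_of_le_ne_top (ENNReal.mul_ne_top ENNReal.ofReal_ne_top measure_ball_lt_top.ne) hball
  have hkernel := (ae_mem_graphSet h hA).mono fun y hy =>
    abs_indicator_sub_phiE_mul_le hK hφ hn h hA hx hy hε (φR := φR)
  rw [integral_sub_Tphi_eq hK hφ hn h hf x hε]
  calc _ ≤ ENNReal.ofReal (CK / ε ^ n) *
        graphMeasure n d h A (Metric.ball x (3 * Real.sqrt n * (1 + LA) * ε)) *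
          maxB d (graphMeasure n d h A) f x :=
        ofReal_abs_integral_mul_le_maxB _ f hr hfin hkernel
    _ ≤ ENNReal.ofReal (CK / ε ^ n) * (ENNReal.ofReal (((1 + LA) *
          (3 * Real.sqrt n * (1 + LA) * ε)) ^ n) * μH[(n : ℝ)] (Metric.ball (0 : Euc n) 1)) *
          maxB d (graphMeasure n d h A) f x := by gcongr
    _ = _ := by
        rw [← mul_assoc, ← ENNReal.ofReal_mul (div_nonneg hK.pos.le (pow_nonneg hε.le n)), show (1 + (LA : ℝ)) * (3 * Real.sqrt n * (1 + LA) * ε) =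
          3 * Real.sqrt n * (1 + LA) ^ 2 * ε by ring, mul_pow]
        congr 3
        field_simp

end Truncation

/-- (Comparison of rough and smooth truncations.) There is `C`,
depending only on `n, d, K, φ_ℝ, Lip(A)`, such that for every `f ∈ L¹(μ)`, `x ∈ Γ` and
`ε > 0`, `|T^μ_ε f(x) − T^μ_{φ_ε} f(x)| ≤ C M^μ f(x)`; in particular
`|T^μ_ε f(x)| ≤ T^μ_{φ_*} f(x) + C M^μ f(x)`. -/
theorem rough_vs_smooth_truncation
    (n d : ℕ) (hn : 0 < n) (hnd : n < d)
    (CK : ℝ) (K : Euc d → ℝ) (hK : IsCZKernel n d CK K)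
    (φR : ℝ → ℝ) (hφ : IsCutoff n φR)
    (LA : ℝ≥0) :
    ∃ C : ℝ, 0 < C ∧
      ∀ (A : Euc n → Euc (d - n)), LipschitzWith LA A →
        ∀ f : Euc d → ℝ, Integrable f (graphMeasure n d hnd.le A) →
          ∀ x ∈ graphSet n d hnd.le A, ∀ ε : ℝ, 0 < ε →
            (ENNReal.ofReal
                |(∫ y in {y : Euc d | ε < dist x y},
                    K (x - y) * f y ∂(graphMeasure n d hnd.le A)) -
                  Tphi n d hnd.le φR K (graphMeasure n d hnd.le A) f ε x|
              ≤ ENNReal.ofReal C * maxB d (graphMeasure n d hnd.le A) f x) ∧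
            (ENNReal.ofReal
                |∫ y in {y : Euc d | ε < dist x y},
                    K (x - y) * f y ∂(graphMeasure n d hnd.le A)|
              ≤ (⨆ (δ : ℝ) (_ : 0 < δ),
                  ENNReal.ofReal
                    |Tphi n d hnd.le φR K (graphMeasure n d hnd.le A) f δ x|) +
                  ENNReal.ofReal C * maxB d (graphMeasure n d hnd.le A) f x) := by
  set V := μH[(n : ℝ)] (Metric.ball (0 : Euc n) 1)
  have hV : V ≠ ⊤ := measure_ball_lt_top.ne
  have hV_pos : 0 < V.toReal := ENNReal.toReal_pos (Metric.measure_ball_pos _ _ one_pos).ne' hV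
  have hCK := hK.pos
  refine ⟨CK * (3 * Real.sqrt n * (1 + LA) ^ 2) ^ n * V.toReal, by positivity, ?_⟩
  intro A hA f hf x hx ε hε
  have hC : ENNReal.ofReal (CK * (3 * Real.sqrt n * (1 + LA) ^ 2) ^ n * V.toReal) =
      ENNReal.ofReal (CK * (3 * Real.sqrt n * (1 + LA) ^ 2) ^ n) * V := by
    rw [ENNReal.ofReal_mul (by positivity), ENNReal.ofReal_toReal hV]
  have hdiff := ofReal_abs_integral_sub_Tphi_le hK hφ hn hnd.le hA hf hx hε
  rw [← hC] at hdiff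
  refine ⟨hdiff, ?_⟩
  set T := Tphi n d hnd.le φR K (graphMeasure n d hnd.le A) f
  set I := ∫ y in {y : Euc d | ε < dist x y}, K (x - y) * f y ∂(graphMeasure n d hnd.le A)
  calc ENNReal.ofReal |I| ≤ ENNReal.ofReal |T ε x| + ENNReal.ofReal |I - T ε x| :=
        (ENNReal.ofReal_le_ofReal (by linarith [abs_sub_abs_le_abs_sub I (T ε x)])).trans
          ENNReal.ofReal_add_le
    _ ≤ _ := add_le_add (le_iSup₂ (f := fun δ (_ : 0 < δ) => ENNReal.ofReal |T δ x|) ε hε) hdiff
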